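/- For a positive definite diagonal matrix Q and vectors b, l ∈ R^m, a point y ∈ R^m with y ≥ l minimizes (1/2)yᵀQy − bᵀy over {y : y ≥ l} if and only if for every i, min(y_i − b_i/Q_ii, y_i − l_i) = 0. -/
import Mathlib

open Finset

lemma scalar_le (a c l t : ℝ) (ha : 0 < a) (hl : l ≤ t) :
    (1/2)*a*(max (c/a) l)^2 - c*(max (c/a) l) ≤ (1/2)*a*t^2 - c*t := by
  have hca : a * (c/a) = c := mul_div_cancel₀ c (ne_of_gt ha)
  rcases max_cases (c/a) l with ⟨h1, h2⟩ | ⟨h1, h2⟩ <;> rw [h1]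
  · nlinarith [sq_nonneg (t - c/a)]
  · have hcl : c ≤ a*l := by
      have := mul_le_mul_of_nonneg_left h2.le ha.le
      rwa [hca] at this
    nlinarith [sq_nonneg (t - l), mul_nonneg (sub_nonneg.2 hl) (sub_nonneg.2 hcl)]

lemma scalar_lt (a c l t : ℝ) (ha : 0 < a) (hl : l ≤ t) (hne : t ≠ max (c/a) l) :
    (1/2)*a*(max (c/a) l)^2 - c*(max (c/a) l) < (1/2)*a*t^2 - c*t := by
  have hca : a * (c/a) = c := mul_div_cancel₀ c (ne_of_gt ha)
  rcases max_cases (c/a) l with ⟨h1, h2⟩ | ⟨h1, h2⟩ <;> rw [h1] at hne ⊢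
  · have : (t - c/a) ≠ 0 := sub_ne_zero.2 hne
    nlinarith [mul_pos ha (mul_self_pos.2 this)]
  · have hcl : c ≤ a*l := by
      have := mul_le_mul_of_nonneg_left h2.le ha.le
      rwa [hca] at this
    have hlt : l < t := lt_of_le_of_ne hl (Ne.symm hne)
    nlinarith [mul_pos ha (mul_pos (sub_pos.2 hlt) (sub_pos.2 hlt)),
      mul_nonneg (sub_pos.2 hlt).le (sub_nonneg.2 hcl)]

/-- For diagonal positive `Q` (given by its diagonal entries), a feasible
point `y ≥ l` minimizes `(1/2) yᵀQy − bᵀy` over `{y | y ≥ l}` iff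
`min (y i − b i / Q i) (y i − l i) = 0` for all `i`. -/
theorem stmt2 {m : ℕ} (Q : Fin m → ℝ) (hQ : ∀ i, 0 < Q i) (b l : Fin m → ℝ)
    (f : (Fin m → ℝ) → ℝ)
    (hf : ∀ y, f y = (1/2) * (∑ i, Q i * y i ^ 2) - ∑ i, b i * y i)
    (y : Fin m → ℝ) (hy : ∀ i, l i ≤ y i) :
    (∀ y' : Fin m → ℝ, (∀ i, l i ≤ y' i) → f y ≤ f y') ↔
      ∀ i, min (y i - b i / Q i) (y i - l i) = 0 := by
  set F : Fin m → ℝ → ℝ := fun j t => (1/2)*(Q j)*t^2 - b j * t with hF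
  have hfs : ∀ z : Fin m → ℝ, f z = ∑ j, F j (z j) := by
    intro z
    rw [hf, Finset.mul_sum, ← Finset.sum_sub_distrib]
    exact Finset.sum_congr rfl (fun j _ => by ring)
  -- reformulate the min condition
  have hmin : ∀ i, (min (y i - b i / Q i) (y i - l i) = 0 ↔ y i = max (b i / Q i) (l i)) := by
    intro i
    rw [min_sub_sub_left, sub_eq_zero]
  constructor
  · intro hmin' i
    rw [hmin i]
    by_contra hne
    set s := max (b i / Q i) (l i) with hsdef
    set y' := Function.update y i s with hy'
    have hfeas : ∀ j, l j ≤ y' j := by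
      intro j
      by_cases hj : j = i
      · subst hj; rw [hy', Function.update_self]; exact le_max_right _ _
      · rw [hy', Function.update_of_ne hj]; exact hy j
    have hle := hmin' y' hfeas
    have hsum : (fun j => F j (y' j)) = Function.update (fun j => F j (y j)) i (F i s) := by
      funext j
      by_cases hj : j = i
      · subst hj; rw [hy', Function.update_self, Function.update_self]
      · rw [hy', Function.update_of_ne hj, Function.update_of_ne hj]
    have h1 : f y' = F i s + ∑ j ∈ univ.erase i, F j (y j) := by
      rw [hfs, hsum, Finset.sum_update_of_mem (mem_univ i), Finset.sdiff_singleton_eq_erase]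
    have h2 : f y = F i (y i) + ∑ j ∈ univ.erase i, F j (y j) := by
      rw [hfs, ← Finset.add_sum_erase _ _ (mem_univ i)]
    have hstrict : F i s < F i (y i) := scalar_lt (Q i) (b i) (l i) (y i) (hQ i) (hy i) hne
    rw [h1, h2] at hle
    linarith
  · intro hc y' hfeas
    rw [hfs, hfs]
    apply Finset.sum_le_sum
    intro j _
    have hyj : y j = max (b j / Q j) (l j) := (hmin j).1 (hc j)
    rw [hyj]
    exact scalar_le (Q j) (b j) (l j) (y' j) (hQ j) (hfeas j)
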